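/- Let X, Y ⊆ ℙⁿ be closed reduced irreducible subvarieties over an algebraically closed field. The commutative square with top vertex M(X,Y), sides the projections M(X,Y) → N(X), (x,z,y,l) ↦ (x,z,l), and M(X,Y) → N(Y), (x,z,y,l) ↦ (z,y,l), and bottom maps N(X) → JB(X,Y), (x,z,l) ↦ (z,l), and N(Y) → JB(X,Y), (z,y,l) ↦ (z,l), is a fiber square; that is, M(X,Y) ≅ N(X) ×_{JB(X,Y)} N(Y). -/

import Mathlib

/-!
Set-level classical algebraic geometry over projective space, providing the
constructions of M. Dale's "Terracini's lemma and the secant variety of a curve"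
extended to embedded joins, following J. Beckman.

* `ℙⁿ` over `k` is modelled as `Projectivization k (ι → k)` for a finite index
  type `ι` (typically `Fin (n+1)`), equipped with the Zariski topology `PT`
  generated by zero loci of polynomials (vanishing being required on all
  representatives of a point, which is exactly vanishing of all homogeneous
  components on the point).  Products of projective spaces carry the analogous
  (multi-)Zariski topologies `PT2`, `PT3`, `PT4`, which are finer than the
  product topologies, as they should be.
* Lines in `ℙⁿ` are encoded by their Plücker points in `ℙ(ι × ι → k)`
  (the projectivized space of `2×2`-minors matrices `x ∧ y`), so that the
  Grassmannian `G(1,n)` carries its Zariski topology as a subspace; `onLine`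
  is the incidence relation.
* Embedded (projective) tangent spaces are cut out by the Jacobians of the
  vanishing ideal: `aT X x` is the affine cone of the embedded tangent space
  of `X` at `x` and `pT X x` its projectivization; similarly `aT2`, `aT3`,
  `aT4` for subvarieties of products.
* The degree of a dominant, generically finite map is modelled by generic
  fibre cardinality (`DegreeOn`), and separable generation of the function
  field extension of a dominant map by generic surjectivity of the induced
  tangent map (generic smoothness, `SepGen…`), as is classically equivalent.
-/

noncomputable section

open MvPolynomial Module Set

/-- Projective space on the coordinate space `ι → k`. -/
abbrev Pj (k : Type) [Field k] (ι : Type) := Projectivization k (ι → k)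

variable {k : Type} [Field k]

/-- `v` is a representative vector of the projective point `p`. -/
def PRep {ι : Type} (v : ι → k) (p : Pj k ι) : Prop :=
  ∃ hv : v ≠ 0, Projectivization.mk k v hv = p

/-- A default point of projective space (all coordinates equal to `1`). -/
def defaultPt (k : Type) [Field k] (ι : Type) [Nonempty ι] : Pj k ι :=
  Projectivization.mk k (fun _ => (1 : k))
    (fun h => one_ne_zero (congrFun h (Classical.arbitrary ι)))

open scoped Classical in
/-- The projective point with representative `v`, or a default point if `v = 0`. -/
def mkOr {ι : Type} [Nonempty ι] (v : ι → k) : Pj k ι :=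
  if h : v ≠ 0 then Projectivization.mk k v h else defaultPt k ι

/-- Zero locus in projective space: points all of whose representatives kill `f`
(equilvalently, the common zero locus of the homogeneous components of `f`). -/
def ZL {ι : Type} (f : MvPolynomial ι k) : Set (Pj k ι) :=
  {p | ∀ v, PRep v p → eval v f = 0}

/-- The Zariski topology on projective space. -/
def PT (k : Type) [Field k] (ι : Type) : TopologicalSpace (Pj k ι) :=
  TopologicalSpace.generateFrom {U | ∃ f : MvPolynomial ι k, U = (ZL f)ᶜ}

/-- Joint representative of a pair of projective points. -/
def PRep2 {ι κ : Type} (u : ι ⊕ κ → k) (p : Pj k ι × Pj k κ) : Prop :=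
  PRep (fun i => u (Sum.inl i)) p.1 ∧ PRep (fun j => u (Sum.inr j)) p.2

/-- Bihomogeneous zero locus in a product of two projective spaces. -/
def ZL2 {ι κ : Type} (f : MvPolynomial (ι ⊕ κ) k) : Set (Pj k ι × Pj k κ) :=
  {p | ∀ u, PRep2 u p → eval u f = 0}

/-- The Zariski topology on a product of two projective spaces. -/
def PT2 (k : Type) [Field k] (ι κ : Type) : TopologicalSpace (Pj k ι × Pj k κ) :=
  TopologicalSpace.generateFrom {U | ∃ f : MvPolynomial (ι ⊕ κ) k, U = (ZL2 f)ᶜ}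

/-- Joint representative of a triple of projective points. -/
def PRep3 {ι κ μ : Type} (u : ι ⊕ (κ ⊕ μ) → k) (p : Pj k ι × Pj k κ × Pj k μ) : Prop :=
  PRep (fun i => u (Sum.inl i)) p.1 ∧ PRep (fun i => u (Sum.inr (Sum.inl i))) p.2.1 ∧
    PRep (fun i => u (Sum.inr (Sum.inr i))) p.2.2

/-- Multihomogeneous zero locus in a product of three projective spaces. -/
def ZL3 {ι κ μ : Type} (f : MvPolynomial (ι ⊕ (κ ⊕ μ)) k) : Set (Pj k ι × Pj k κ × Pj k μ) :=
  {p | ∀ u, PRep3 u p → eval u f = 0}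

/-- The Zariski topology on a product of three projective spaces. -/
def PT3 (k : Type) [Field k] (ι κ μ : Type) : TopologicalSpace (Pj k ι × Pj k κ × Pj k μ) :=
  TopologicalSpace.generateFrom {U | ∃ f : MvPolynomial (ι ⊕ (κ ⊕ μ)) k, U = (ZL3 f)ᶜ}

/-- Joint representative of a quadruple of projective points. -/
def PRep4 {ι κ μ ν : Type} (u : ι ⊕ (κ ⊕ (μ ⊕ ν)) → k)
    (p : Pj k ι × Pj k κ × Pj k μ × Pj k ν) : Prop :=
  PRep (fun i => u (Sum.inl i)) p.1 ∧ PRep (fun i => u (Sum.inr (Sum.inl i))) p.2.1 ∧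
    PRep (fun i => u (Sum.inr (Sum.inr (Sum.inl i)))) p.2.2.1 ∧
    PRep (fun i => u (Sum.inr (Sum.inr (Sum.inr i)))) p.2.2.2

/-- Multihomogeneous zero locus in a product of four projective spaces. -/
def ZL4 {ι κ μ ν : Type} (f : MvPolynomial (ι ⊕ (κ ⊕ (μ ⊕ ν))) k) :
    Set (Pj k ι × Pj k κ × Pj k μ × Pj k ν) :=
  {p | ∀ u, PRep4 u p → eval u f = 0}

/-- The Zariski topology on a product of four projective spaces. -/
def PT4 (k : Type) [Field k] (ι κ μ ν : Type) :
    TopologicalSpace (Pj k ι × Pj k κ × Pj k μ × Pj k ν) :=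
  TopologicalSpace.generateFrom {U | ∃ f : MvPolynomial (ι ⊕ (κ ⊕ (μ ⊕ ν))) k, U = (ZL4 f)ᶜ}

/-- The (homogeneous) vanishing ideal of a subset of projective space. -/
def VI {ι : Type} (X : Set (Pj k ι)) : Set (MvPolynomial ι k) :=
  {f | ∀ p ∈ X, ∀ v, PRep v p → eval v f = 0}

/-- The linear functional `a ↦ ∑ i, c i * a i` (a row of a Jacobian). -/
def jac {ι : Type} [Fintype ι] (c : ι → k) : (ι → k) →ₗ[k] k :=
  ∑ i, c i • (LinearMap.proj i : (ι → k) →ₗ[k] k)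

/-- The affine cone of the embedded tangent space of `X ⊆ ℙ(ι → k)` at `x`:
the common kernel of the differentials at `x` of all elements of the
vanishing ideal of `X`. -/
def aT {ι : Type} [Fintype ι] (X : Set (Pj k ι)) (x : Pj k ι) : Submodule k (ι → k) :=
  ⨅ f ∈ VI X, LinearMap.ker (jac fun i => eval x.rep (pderiv i f))

/-- The embedded projective tangent space of `X` at `x`. -/
def pT {ι : Type} [Fintype ι] (X : Set (Pj k ι)) (x : Pj k ι) : Set (Pj k ι) :=
  {p | ∀ v, PRep v p → v ∈ aT X x}

/-- The vanishing ideal of a subset of a product of two projective spaces. -/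
def VI2 {ι κ : Type} (W : Set (Pj k ι × Pj k κ)) : Set (MvPolynomial (ι ⊕ κ) k) :=
  {f | ∀ p ∈ W, ∀ u, PRep2 u p → eval u f = 0}

/-- Canonical joint representative of a pair of projective points. -/
def rep2 {ι κ : Type} (w : Pj k ι × Pj k κ) : ι ⊕ κ → k := Sum.elim w.1.rep w.2.rep

/-- The affine cone of the embedded tangent space of `W ⊆ ℙ × ℙ` at `w`. -/
def aT2 {ι κ : Type} [Fintype ι] [Fintype κ] (W : Set (Pj k ι × Pj k κ))
    (w : Pj k ι × Pj k κ) : Submodule k (ι ⊕ κ → k) :=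
  ⨅ f ∈ VI2 W, LinearMap.ker (jac fun s => eval (rep2 w) (pderiv s f))

/-- The embedded tangent space of `W ⊆ ℙ × ℙ` at `w`, as a subset of `ℙ × ℙ`. -/
def pT2 {ι κ : Type} [Fintype ι] [Fintype κ] (W : Set (Pj k ι × Pj k κ))
    (w : Pj k ι × Pj k κ) : Set (Pj k ι × Pj k κ) :=
  {q | ∃ u ∈ aT2 W w, PRep2 u q}

/-- The vanishing ideal of a subset of a product of three projective spaces. -/
def VI3 {ι κ μ : Type} (W : Set (Pj k ι × Pj k κ × Pj k μ)) :
    Set (MvPolynomial (ι ⊕ (κ ⊕ μ)) k) :=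
  {f | ∀ p ∈ W, ∀ u, PRep3 u p → eval u f = 0}

/-- Canonical joint representative of a triple of projective points. -/
def rep3 {ι κ μ : Type} (w : Pj k ι × Pj k κ × Pj k μ) : ι ⊕ (κ ⊕ μ) → k :=
  Sum.elim w.1.rep (Sum.elim w.2.1.rep w.2.2.rep)

/-- The affine cone of the embedded tangent space of `W ⊆ ℙ × ℙ × ℙ` at `w`. -/
def aT3 {ι κ μ : Type} [Fintype ι] [Fintype κ] [Fintype μ]
    (W : Set (Pj k ι × Pj k κ × Pj k μ)) (w : Pj k ι × Pj k κ × Pj k μ) :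
    Submodule k (ι ⊕ (κ ⊕ μ) → k) :=
  ⨅ f ∈ VI3 W, LinearMap.ker (jac fun s => eval (rep3 w) (pderiv s f))

/-- The vanishing ideal of a subset of a product of four projective spaces. -/
def VI4 {ι κ μ ν : Type} (W : Set (Pj k ι × Pj k κ × Pj k μ × Pj k ν)) :
    Set (MvPolynomial (ι ⊕ (κ ⊕ (μ ⊕ ν))) k) :=
  {f | ∀ p ∈ W, ∀ u, PRep4 u p → eval u f = 0}

/-- Canonical joint representative of a quadruple of projective points. -/
def rep4 {ι κ μ ν : Type} (w : Pj k ι × Pj k κ × Pj k μ × Pj k ν) :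
    ι ⊕ (κ ⊕ (μ ⊕ ν)) → k :=
  Sum.elim w.1.rep (Sum.elim w.2.1.rep (Sum.elim w.2.2.1.rep w.2.2.2.rep))

/-- The affine cone of the embedded tangent space of `W ⊆ ℙ × ℙ × ℙ × ℙ` at `w`. -/
def aT4 {ι κ μ ν : Type} [Fintype ι] [Fintype κ] [Fintype μ] [Fintype ν]
    (W : Set (Pj k ι × Pj k κ × Pj k μ × Pj k ν)) (w : Pj k ι × Pj k κ × Pj k μ × Pj k ν) :
    Submodule k (ι ⊕ (κ ⊕ (μ ⊕ ν)) → k) :=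
  ⨅ f ∈ VI4 W, LinearMap.ker (jac fun s => eval (rep4 w) (pderiv s f))

/-- The projective linear span of a set of projective points. -/
def pSpan {ι : Type} (S : Set (Pj k ι)) : Set (Pj k ι) :=
  {p | p.rep ∈ Submodule.span k (Projectivization.rep '' S)}

/-- The line through two (distinct) projective points, as a set of points. -/
def lineSet {ι : Type} (x y : Pj k ι) : Set (Pj k ι) := pSpan {x, y}

/-- The union of the lines joining distinct points of `X` and `Y`. -/
def joinSet {ι : Type} (X Y : Set (Pj k ι)) : Set (Pj k ι) :=
  ⋃ x ∈ X, ⋃ y ∈ Y, ⋃ (_ : x ≠ y), lineSet x y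

/-- The embedded join `EJ(X,Y)`: the Zariski closure of the union of all lines
joining distinct points of `X` and `Y`. -/
def EJ {ι : Type} (X Y : Set (Pj k ι)) : Set (Pj k ι) := @closure _ (PT k ι) (joinSet X Y)

/-- The wedge (matrix of `2×2` minors) of two coordinate vectors; its
projectivization is the Plücker point of the line they span. -/
def wedge {ι : Type} (a b : ι → k) : ι × ι → k := fun q => a q.1 * b q.2 - a q.2 * b q.1

open scoped Classical in
/-- The Plücker point in `ℙ(ι × ι → k)` of the line through `x` and `y`. -/
def pluck {ι : Type} [Nonempty ι] (x y : Pj k ι) : Pj k (ι × ι) :=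
  if h : wedge x.rep y.rep ≠ 0 then Projectivization.mk k _ h else defaultPt k (ι × ι)

/-- Incidence of a point `z ∈ ℙⁿ` with (the Plücker point of) a line `l`. -/
def onLine {ι : Type} (z : Pj k ι) (l : Pj k (ι × ι)) : Prop :=
  ∀ a b, PRep a z → PRep b l →
    ∀ i j m, b (i, j) * a m + b (j, m) * a i + b (m, i) * a j = 0

/-- The set of points of `ℙⁿ` lying on the line with Plücker point `l`. -/
def linePts {ι : Type} (l : Pj k (ι × ι)) : Set (Pj k ι) := {z | onLine z l}

/-- `JL(X,Y) ⊆ G(1,n)`: the variety of join lines of `X` and `Y`, i.e. the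
closure (inside the Plücker projective space) of the set of lines through a
point of `X` and a distinct point of `Y`. -/
def JL {ι : Type} [Nonempty ι] (X Y : Set (Pj k ι)) : Set (Pj k (ι × ι)) :=
  @closure _ (PT k (ι × ι)) {l | ∃ x ∈ X, ∃ y ∈ Y, x ≠ y ∧ l = pluck x y}

/-- `JB(X,Y) = {(z,l) : z ∈ l ∈ JL(X,Y)} ⊆ ℙⁿ × G(1,n)`. -/
def JB {ι : Type} [Nonempty ι] (X Y : Set (Pj k ι)) : Set (Pj k ι × Pj k (ι × ι)) :=
  {q | q.2 ∈ JL X Y ∧ onLine q.1 q.2}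

/-- `Γ(X,Y) ⊆ ℙⁿ × ℙⁿ × G(1,n)`: the closure of the graph of
`(x,y) ↦ line(x,y)`. -/
def Gam {ι : Type} [Nonempty ι] (X Y : Set (Pj k ι)) :
    Set (Pj k ι × Pj k ι × Pj k (ι × ι)) :=
  @closure _ (PT3 k ι ι (ι × ι))
    {q | q.1 ∈ X ∧ q.2.1 ∈ Y ∧ q.1 ≠ q.2.1 ∧ q.2.2 = pluck q.1 q.2.1}

/-- `W(X)`: the closure of `{(x,z) : x ∈ X, z ∈ L for some join line L ∋ x}`. -/
def Wx {ι : Type} [Nonempty ι] (X Y : Set (Pj k ι)) : Set (Pj k ι × Pj k ι) :=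
  @closure _ (PT2 k ι ι) {q | ∃ l ∈ JL X Y, q.1 ∈ X ∧ onLine q.1 l ∧ onLine q.2 l}

/-- `W(Y)`: the closure of `{(z,y) : y ∈ Y, z ∈ L for some join line L ∋ y}`. -/
def Wy {ι : Type} [Nonempty ι] (X Y : Set (Pj k ι)) : Set (Pj k ι × Pj k ι) :=
  @closure _ (PT2 k ι ι) {q | ∃ l ∈ JL X Y, q.2 ∈ Y ∧ onLine q.2 l ∧ onLine q.1 l}

/-- `N(X)`: the closure of `{(x,z,l) : z ∈ l ∈ JB(X,Y), x ∈ l ∩ X}`. -/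
def Nx {ι : Type} [Nonempty ι] (X Y : Set (Pj k ι)) :
    Set (Pj k ι × Pj k ι × Pj k (ι × ι)) :=
  @closure _ (PT3 k ι ι (ι × ι))
    {q | q.2.2 ∈ JL X Y ∧ q.1 ∈ X ∧ onLine q.1 q.2.2 ∧ onLine q.2.1 q.2.2}

/-- `N(Y)`: the closure of `{(z,y,l) : z ∈ l ∈ JB(X,Y), y ∈ l ∩ Y}`. -/
def Ny {ι : Type} [Nonempty ι] (X Y : Set (Pj k ι)) :
    Set (Pj k ι × Pj k ι × Pj k (ι × ι)) :=
  @closure _ (PT3 k ι ι (ι × ι))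
    {q | q.2.2 ∈ JL X Y ∧ q.2.1 ∈ Y ∧ onLine q.2.1 q.2.2 ∧ onLine q.1 q.2.2}

/-- `M(X,Y)`: the closure of
`{(x,z,y,l) : z ∈ l ∈ JB(X,Y), x ∈ l ∩ X, y ∈ l ∩ Y}`. -/
def Mj {ι : Type} [Nonempty ι] (X Y : Set (Pj k ι)) :
    Set (Pj k ι × Pj k ι × Pj k ι × Pj k (ι × ι)) :=
  @closure _ (PT4 k ι ι ι (ι × ι))
    {q | q.2.2.2 ∈ JL X Y ∧ q.1 ∈ X ∧ q.2.2.1 ∈ Y ∧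
      onLine q.1 q.2.2.2 ∧ onLine q.2.1 q.2.2.2 ∧ onLine q.2.2.1 q.2.2.2}

/-- Dimension of a subset in a given topology (topological Krull dimension). -/
def dimOf {α : Type} (t : TopologicalSpace α) (S : Set α) : WithBot ℕ∞ :=
  @topologicalKrullDim S (TopologicalSpace.induced Subtype.val t)

/-- `U` is an open dense subset of `S` (in the subspace topology). -/
def OpenDenseIn {α : Type} (t : TopologicalSpace α) (U S : Set α) : Prop :=
  U ⊆ S ∧ (∃ V, @IsOpen _ t V ∧ U = V ∩ S) ∧ S ⊆ @closure _ t U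

/-- `f` maps `S` dominantly onto `T`. -/
def DominantOn {α β : Type} (tβ : TopologicalSpace β) (S : Set α) (T : Set β)
    (f : α → β) : Prop :=
  T ⊆ @closure _ tβ (f '' S)

/-- `f : S → T` is dominant of degree `d`: the general fibre consists of
exactly `d` points. -/
def DegreeOn {α β : Type} (tβ : TopologicalSpace β) (S : Set α) (T : Set β)
    (f : α → β) (d : ℕ) : Prop :=
  DominantOn tβ S T f ∧
    ∃ U, OpenDenseIn tβ U T ∧ ∀ b ∈ U, (S ∩ f ⁻¹' {b}).Finite ∧ (S ∩ f ⁻¹' {b}).ncard = d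

/-- `l` is an `(mX, mY)`-join line: it meets `X` in `mX` and `Y` in `mY` points. -/
def JoinLineType {ι : Type} (X Y : Set (Pj k ι)) (mX mY : ℕ) (l : Pj k (ι × ι)) : Prop :=
  (X ∩ linePts l).Finite ∧ (X ∩ linePts l).ncard = mX ∧
    (Y ∩ linePts l).Finite ∧ (Y ∩ linePts l).ncard = mY

/-- `EJ(X,Y)` is `(mX,mY)`-joined: the general join line is an `(mX,mY)`-join line. -/
def IsJoined {ι : Type} [Nonempty ι] (X Y : Set (Pj k ι)) (mX mY : ℕ) : Prop :=
  ∃ U, OpenDenseIn (PT k (ι × ι)) U (JL X Y) ∧ ∀ l ∈ U, JoinLineType X Y mX mY l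

/-- `t(X,Y) + 1`: the minimal value of `dim (cone T_{X,x} ∩ cone T_{Y,y})`
(one more than the minimal dimension of the intersection of embedded
projective tangent spaces). -/
def tJ {ι : Type} [Fintype ι] (X Y : Set (Pj k ι)) : ℕ :=
  sInf {d | ∃ x ∈ X, ∃ y ∈ Y, finrank k ↥(aT X x ⊓ aT Y y) = d}

/-- `X, Y` is a constrained pair:
`dim EJ(X,Y) > dim X + dim Y - t(X,Y)`. -/
def ConstrainedPair {ι : Type} [Fintype ι] (X Y : Set (Pj k ι)) : Prop :=
  dimOf (PT k ι) X + dimOf (PT k ι) Y + 1 <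
    dimOf (PT k ι) (EJ X Y) + (tJ X Y : WithBot ℕ∞)

/-- The first inclusion `ℙⁿ ↪ ℙ^{2n+1}`, `[a] ↦ [a, 0]`. -/
def embL {ι : Type} (x : Pj k ι) : Pj k (ι ⊕ ι) :=
  Projectivization.mk k (Sum.elim x.rep 0)
    (fun h => x.rep_nonzero (funext fun i => congrFun h (Sum.inl i)))

/-- The second inclusion `ℙⁿ ↪ ℙ^{2n+1}`, `[b] ↦ [0, b]`. -/
def embR {ι : Type} (x : Pj k ι) : Pj k (ι ⊕ ι) :=
  Projectivization.mk k (Sum.elim 0 x.rep)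
    (fun h => x.rep_nonzero (funext fun i => congrFun h (Sum.inr i)))

/-- The ruled join `RJ(X,Y) ⊆ ℙ^{2n+1}`: the embedded join of disjoint copies
of `X` and `Y` placed in complementary `n`-planes. -/
def RJ {ι : Type} (X Y : Set (Pj k ι)) : Set (Pj k (ι ⊕ ι)) :=
  EJ (embL '' X) (embR '' Y)

/-- The linear map `(a, b) ↦ a - b` inducing the projection
`ℙ^{2n+1} ⇢ ℙⁿ` with centre `V(a₀ - b₀, …, aₙ - bₙ)`. -/
def diffL (k : Type) [Field k] (ι : Type) : ((ι ⊕ ι) → k) →ₗ[k] (ι → k) :=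
  LinearMap.funLeft k k Sum.inl - LinearMap.funLeft k k Sum.inr

open scoped Classical in
/-- The canonical projection `π : ℙ^{2n+1} ⇢ ℙⁿ` (restricting to
`RJ(X,Y) ⇢ EJ(X,Y)`), with junk value on its centre. -/
def rjProj {ι : Type} [Nonempty ι] (p : Pj k (ι ⊕ ι)) : Pj k ι :=
  if h : diffL k ι p.rep ≠ 0 then Projectivization.mk k _ h else defaultPt k ι

/-- `X` is a (projective) linear subspace. -/
def IsLinearSub {ι : Type} (X : Set (Pj k ι)) : Prop :=
  ∃ V : Submodule k (ι → k), X = {p | p.rep ∈ V}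

/-- `X` is nondegenerate: it is contained in no hyperplane. -/
def Nondeg {ι : Type} (X : Set (Pj k ι)) : Prop :=
  ¬∃ V : Submodule k (ι → k), V ≠ ⊤ ∧ ∀ x ∈ X, x.rep ∈ V

/-- `X, Y` is a strange pair: some nonempty projective linear space (with
affine cone `V`) is contained in every embedded tangent space of `X` and of `Y`. -/
def StrangePair {ι : Type} [Fintype ι] (X Y : Set (Pj k ι)) : Prop :=
  ∃ V : Submodule k (ι → k), V ≠ ⊥ ∧ (∀ x ∈ X, V ≤ aT X x) ∧ ∀ y ∈ Y, V ≤ aT Y y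

/-- `x` is a regular (smooth) point of `X`: its embedded tangent space has the
same dimension as `X`. -/
def RegPt {ι : Type} [Fintype ι] (X : Set (Pj k ι)) (x : Pj k ι) : Prop :=
  x ∈ X ∧ (finrank k ↥(aT X x) : WithBot ℕ∞) = dimOf (PT k ι) X + 1

/-- `w` is a regular (smooth) point of `W ⊆ ℙ × ℙ`. -/
def RegPt2 {ι κ : Type} [Fintype ι] [Fintype κ] (W : Set (Pj k ι × Pj k κ))
    (w : Pj k ι × Pj k κ) : Prop :=
  w ∈ W ∧ (finrank k ↥(aT2 W w) : WithBot ℕ∞) = dimOf (PT2 k ι κ) W + 2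

/-- The Fano variety `F₁(Y)` of lines contained in `Y`, inside the Plücker space. -/
def Fano1 {ι : Type} [Nonempty ι] (Y : Set (Pj k ι)) : Set (Pj k (ι × ι)) :=
  {l | (∃ x y, x ≠ y ∧ l = pluck x y) ∧ linePts l ⊆ Y}

/-- Separable generation of the function field extension of a dominant map
`ℙ ⊇ S → T ⊆ ℙ` induced by a linear map `L` on the affine cones, modelled by
generic surjectivity of the tangent map (generic smoothness). -/
def SepGen11 {ι κ : Type} [Fintype ι] [Fintype κ] (S : Set (Pj k ι)) (T : Set (Pj k κ))
    (f : Pj k ι → Pj k κ) (L : (ι → k) →ₗ[k] (κ → k)) : Prop :=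
  DominantOn (PT k κ) S T f ∧
    ∃ U, OpenDenseIn (PT k ι) U S ∧ ∀ p ∈ U, (aT S p).map L = aT T (f p)

/-- Separable generation for a dominant map `ℙ × ℙ ⊇ S → T ⊆ ℙ`, modelled by
generic surjectivity of the tangent map. -/
def SepGen21 {ι κ μ : Type} [Fintype ι] [Fintype κ] [Fintype μ]
    (S : Set (Pj k ι × Pj k κ)) (T : Set (Pj k μ))
    (f : Pj k ι × Pj k κ → Pj k μ) (L : ((ι ⊕ κ) → k) →ₗ[k] (μ → k)) : Prop :=
  DominantOn (PT k μ) S T f ∧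
    ∃ U, OpenDenseIn (PT2 k ι κ) U S ∧ ∀ q ∈ U, (aT2 S q).map L = aT T (f q)

/-- Separable generation for a dominant map `ℙ³ ⊇ S → T ⊆ ℙ²`, modelled by
generic surjectivity of the tangent map. -/
def SepGen32 {ι κ μ κ' μ' : Type} [Fintype ι] [Fintype κ] [Fintype μ]
    [Fintype κ'] [Fintype μ']
    (S : Set (Pj k ι × Pj k κ × Pj k μ)) (T : Set (Pj k κ' × Pj k μ'))
    (f : Pj k ι × Pj k κ × Pj k μ → Pj k κ' × Pj k μ')
    (L : ((ι ⊕ (κ ⊕ μ)) → k) →ₗ[k] ((κ' ⊕ μ') → k)) : Prop :=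
  DominantOn (PT2 k κ' μ') S T f ∧
    ∃ U, OpenDenseIn (PT3 k ι κ μ) U S ∧ ∀ q ∈ U, (aT3 S q).map L = aT2 T (f q)

/-- Separable generation for a dominant map `ℙ⁴ ⊇ S → T ⊆ ℙ³`, modelled by
generic surjectivity of the tangent map. -/
def SepGen43 {ι κ μ ν ι' κ' μ' : Type} [Fintype ι] [Fintype κ] [Fintype μ] [Fintype ν]
    [Fintype ι'] [Fintype κ'] [Fintype μ']
    (S : Set (Pj k ι × Pj k κ × Pj k μ × Pj k ν)) (T : Set (Pj k ι' × Pj k κ' × Pj k μ'))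
    (f : Pj k ι × Pj k κ × Pj k μ × Pj k ν → Pj k ι' × Pj k κ' × Pj k μ')
    (L : ((ι ⊕ (κ ⊕ (μ ⊕ ν))) → k) →ₗ[k] ((ι' ⊕ (κ' ⊕ μ')) → k)) : Prop :=
  DominantOn (PT3 k ι' κ' μ') S T f ∧
    ∃ U, OpenDenseIn (PT4 k ι κ μ ν) U S ∧ ∀ q ∈ U, (aT4 S q).map L = aT3 T (f q)
/-- Coordinates of a point of `𝔸ⁿ⁺¹ × 𝔸ⁿ⁺¹ × 𝔸¹` as a single function. -/
def coordA {ι : Type} (a : (ι → k) × (ι → k) × k) : (ι ⊕ (ι ⊕ Unit)) → k :=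
  Sum.elim a.1 (Sum.elim a.2.1 fun _ => a.2.2)

/-- Affine zero locus in `𝔸ⁿ⁺¹ × 𝔸ⁿ⁺¹ × 𝔸¹`. -/
def ZLA {ι : Type} (f : MvPolynomial (ι ⊕ (ι ⊕ Unit)) k) : Set ((ι → k) × (ι → k) × k) :=
  {a | eval (coordA a) f = 0}

/-- The Zariski topology on `𝔸ⁿ⁺¹ × 𝔸ⁿ⁺¹ × 𝔸¹`. -/
def PTA (k : Type) [Field k] (ι : Type) : TopologicalSpace ((ι → k) × (ι → k) × k) :=
  TopologicalSpace.generateFrom {U | ∃ f : MvPolynomial (ι ⊕ (ι ⊕ Unit)) k, U = (ZLA f)ᶜ}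

/-- Vanishing ideal of a subset of `𝔸ⁿ⁺¹ × 𝔸ⁿ⁺¹ × 𝔸¹`. -/
def VIA {ι : Type} (S : Set ((ι → k) × (ι → k) × k)) :
    Set (MvPolynomial (ι ⊕ (ι ⊕ Unit)) k) :=
  {f | ∀ a ∈ S, eval (coordA a) f = 0}

/-- Affine tangent space (Zariski tangent space) of `S ⊆ 𝔸ⁿ⁺¹ × 𝔸ⁿ⁺¹ × 𝔸¹` at `a`. -/
def aTA {ι : Type} [Fintype ι] (S : Set ((ι → k) × (ι → k) × k))
    (a : (ι → k) × (ι → k) × k) : Submodule k ((ι ⊕ (ι ⊕ Unit)) → k) :=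
  ⨅ f ∈ VIA S, LinearMap.ker (jac fun s => eval (coordA a) (pderiv s f))

/-- The domain of Dale's map `φ`: pairs of points of (the cones over) `X` and `Y`
normalised in the affine charts `{v i0 = 1}`, `{w j0 = 1}`, together with `t ∈ 𝔸¹`. -/
def phiDom {ι : Type} [Nonempty ι] (i0 j0 : ι) (X Y : Set (Pj k ι)) :
    Set ((ι → k) × (ι → k) × k) :=
  {a | a.1 i0 = 1 ∧ mkOr a.1 ∈ X ∧ a.2.1 j0 = 1 ∧ mkOr a.2.1 ∈ Y}

/-- `φ_X (x, y, t) = (x, t·x + (1-t)·y)`. -/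
def phiX {ι : Type} [Nonempty ι] (a : (ι → k) × (ι → k) × k) : Pj k ι × Pj k ι :=
  (mkOr a.1, mkOr (a.2.2 • a.1 + (1 - a.2.2) • a.2.1))

/-- `φ_Y (x, y, t) = (t·x + (1-t)·y, y)`. -/
def phiY {ι : Type} [Nonempty ι] (a : (ι → k) × (ι → k) × k) : Pj k ι × Pj k ι :=
  (mkOr (a.2.2 • a.1 + (1 - a.2.2) • a.2.1), mkOr a.2.1)

/-- The differential of `φ_X` at `(v, w, t)`, on affine (cone) coordinates:
`(dv, dw, dt) ↦ (dv, t·dv + (1-t)·dw + dt·(v - w))`. -/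
def dPhiX {ι : Type} [Fintype ι] (v w : ι → k) (t : k) :
    ((ι ⊕ (ι ⊕ Unit)) → k) →ₗ[k] ((ι ⊕ ι) → k) :=
  LinearMap.pi fun s => Sum.elim
    (fun i => (LinearMap.proj (Sum.inl i) : ((ι ⊕ (ι ⊕ Unit)) → k) →ₗ[k] k))
    (fun i =>
      t • (LinearMap.proj (Sum.inl i) : ((ι ⊕ (ι ⊕ Unit)) → k) →ₗ[k] k)
        + (1 - t) • (LinearMap.proj (Sum.inr (Sum.inl i)) : ((ι ⊕ (ι ⊕ Unit)) → k) →ₗ[k] k)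
        + (v i - w i) •
            (LinearMap.proj (Sum.inr (Sum.inr ())) : ((ι ⊕ (ι ⊕ Unit)) → k) →ₗ[k] k)) s

/-- The differential of `φ_Y` at `(v, w, t)`, on affine (cone) coordinates:
`(dv, dw, dt) ↦ (t·dv + (1-t)·dw + dt·(v - w), dw)`. -/
def dPhiY {ι : Type} [Fintype ι] (v w : ι → k) (t : k) :
    ((ι ⊕ (ι ⊕ Unit)) → k) →ₗ[k] ((ι ⊕ ι) → k) :=
  LinearMap.pi fun s => Sum.elim
    (fun i =>
      t • (LinearMap.proj (Sum.inl i) : ((ι ⊕ (ι ⊕ Unit)) → k) →ₗ[k] k)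
        + (1 - t) • (LinearMap.proj (Sum.inr (Sum.inl i)) : ((ι ⊕ (ι ⊕ Unit)) → k) →ₗ[k] k)
        + (v i - w i) •
            (LinearMap.proj (Sum.inr (Sum.inr ())) : ((ι ⊕ (ι ⊕ Unit)) → k) →ₗ[k] k))
    (fun i => (LinearMap.proj (Sum.inr (Sum.inl i)) : ((ι ⊕ (ι ⊕ Unit)) → k) →ₗ[k] k)) s

/-- The affine cone directions of scalings at a pair of projective points:
the differential of a map to `ℙ × ℙ` is injective (the map is unramified at a
point) iff the preimage of `scal2` in the tangent space is zero. -/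
def scal2 {ι : Type} (p q : Pj k ι) : Submodule k ((ι ⊕ ι) → k) :=
  Submodule.span k {Sum.elim p.rep (0 : ι → k), Sum.elim (0 : ι → k) q.rep}


/-
All of `M(X,Y)`, `N(X)`, `N(Y)` are closures of sets that are already closed: they are cut out
by the closed conditions `l ∈ JL(X,Y)`, `x ∈ X`, `y ∈ Y` and the Plücker incidence relations,
pulled back along coordinate projections. The projections are continuous for the multi-Zariski
topologies because pulling back a zero locus along a projection amounts to renaming variables.
Hence the closures change nothing, and the fibre-product identity is an identity of conditions.
-/

open Topology TopologicalSpace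

/-- `PT`, `PT2`, `PT3`, `PT4` are all definitionally of this form. -/
def zariskiTop {A P : Type} (R : (A → k) → P → Prop) : TopologicalSpace P :=
  generateFrom {U | ∃ f : MvPolynomial A k, U = {p | ∀ u, R u p → eval u f = 0}ᶜ}

lemma isClosed_zeroLocus_zariskiTop {A P : Type} (R : (A → k) → P → Prop)
    (f : MvPolynomial A k) : IsClosed[zariskiTop R] {p | ∀ u, R u p → eval u f = 0} :=
  letI := zariskiTop R
  isOpen_compl_iff.mp (isOpen_generateFrom_of_mem ⟨f, rfl⟩)

lemma continuous_zariskiTop_of_reindex {A B P Q : Type}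
    (R : (A → k) → P → Prop) (S : (B → k) → Q → Prop) (g : P → Q) (σ : B → A)
    (hfwd : ∀ p u, R u p → S (u ∘ σ) (g p))
    (hbwd : ∀ p u', S u' (g p) → ∃ u, R u p ∧ u ∘ σ = u') :
    Continuous[zariskiTop R, zariskiTop S] g := by
  unfold zariskiTop
  rw [continuous_generateFrom_iff]
  rintro U ⟨f, rfl⟩
  have hpre : g ⁻¹' {q | ∀ u, S u q → eval u f = 0} =
      {p | ∀ u, R u p → eval u (rename σ f) = 0} := by
    ext p
    simp only [mem_preimage, mem_ofPred_eq, eval_rename]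
    constructor
    · exact fun H u hu => H (u ∘ σ) (hfwd p u hu)
    · intro H u' hu'
      obtain ⟨u, hu, rfl⟩ := hbwd p u' hu'
      exact H u hu
  rw [preimage_compl, hpre]
  exact isOpen_generateFrom_of_mem ⟨rename σ f, rfl⟩

section Projections

variable {ι κ μ ν : Type}

lemma prep_rep (p : Pj k ι) : PRep p.rep p :=
  ⟨p.rep_nonzero, p.mk_rep⟩

lemma continuous_fst_PT2 :
    Continuous[PT2 k ι κ, PT k ι] (fun w : Pj k ι × Pj k κ => w.1) :=
  continuous_zariskiTop_of_reindex PRep2 PRep _ Sum.inl (fun _ _ h => h.1)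
    fun p u' h => ⟨Sum.elim u' p.2.rep, ⟨h, prep_rep _⟩, rfl⟩

lemma continuous_snd_PT2 :
    Continuous[PT2 k ι κ, PT k κ] (fun w : Pj k ι × Pj k κ => w.2) :=
  continuous_zariskiTop_of_reindex PRep2 PRep _ Sum.inr (fun _ _ h => h.2)
    fun p u' h => ⟨Sum.elim p.1.rep u', ⟨prep_rep _, h⟩, rfl⟩

lemma continuous_proj13_PT3 :
    Continuous[PT3 k ι κ μ, PT2 k ι μ] (fun w : Pj k ι × Pj k κ × Pj k μ => (w.1, w.2.2)) :=
  continuous_zariskiTop_of_reindex PRep3 PRep2 _ (Sum.elim Sum.inl (Sum.inr ∘ Sum.inr))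
    (fun _ _ h => ⟨h.1, h.2.2⟩) fun p u' h =>
      ⟨Sum.elim (u' ∘ Sum.inl) (Sum.elim p.2.1.rep (u' ∘ Sum.inr)), ⟨h.1, prep_rep _, h.2⟩,
        funext fun s => by cases s <;> rfl⟩

lemma continuous_proj23_PT3 :
    Continuous[PT3 k ι κ μ, PT2 k κ μ] (fun w : Pj k ι × Pj k κ × Pj k μ => (w.2.1, w.2.2)) :=
  continuous_zariskiTop_of_reindex PRep3 PRep2 _
    (Sum.elim (Sum.inr ∘ Sum.inl) (Sum.inr ∘ Sum.inr))
    (fun _ _ h => h.2) fun p u' h =>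
      ⟨Sum.elim p.1.rep u', ⟨prep_rep _, h⟩, funext fun s => by cases s <;> rfl⟩

lemma continuous_proj14_PT4 :
    Continuous[PT4 k ι κ μ ν, PT2 k ι ν]
      (fun w : Pj k ι × Pj k κ × Pj k μ × Pj k ν => (w.1, w.2.2.2)) :=
  continuous_zariskiTop_of_reindex PRep4 PRep2 _
    (Sum.elim Sum.inl (Sum.inr ∘ Sum.inr ∘ Sum.inr))
    (fun _ _ h => ⟨h.1, h.2.2.2⟩) fun p u' h =>
      ⟨Sum.elim (u' ∘ Sum.inl) (Sum.elim p.2.1.rep (Sum.elim p.2.2.1.rep (u' ∘ Sum.inr))),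
        ⟨h.1, prep_rep _, prep_rep _, h.2⟩, funext fun s => by cases s <;> rfl⟩

lemma continuous_proj24_PT4 :
    Continuous[PT4 k ι κ μ ν, PT2 k κ ν]
      (fun w : Pj k ι × Pj k κ × Pj k μ × Pj k ν => (w.2.1, w.2.2.2)) :=
  continuous_zariskiTop_of_reindex PRep4 PRep2 _
    (Sum.elim (Sum.inr ∘ Sum.inl) (Sum.inr ∘ Sum.inr ∘ Sum.inr))
    (fun _ _ h => ⟨h.2.1, h.2.2.2⟩) fun p u' h =>
      ⟨Sum.elim p.1.rep (Sum.elim (u' ∘ Sum.inl) (Sum.elim p.2.2.1.rep (u' ∘ Sum.inr))),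
        ⟨prep_rep _, h.1, prep_rep _, h.2⟩, funext fun s => by cases s <;> rfl⟩

lemma continuous_proj34_PT4 :
    Continuous[PT4 k ι κ μ ν, PT2 k μ ν]
      (fun w : Pj k ι × Pj k κ × Pj k μ × Pj k ν => (w.2.2.1, w.2.2.2)) :=
  continuous_zariskiTop_of_reindex PRep4 PRep2 _
    (Sum.elim (Sum.inr ∘ Sum.inr ∘ Sum.inl) (Sum.inr ∘ Sum.inr ∘ Sum.inr))
    (fun _ _ h => h.2.2) fun p u' h =>
      ⟨Sum.elim p.1.rep (Sum.elim p.2.1.rep u'), ⟨prep_rep _, prep_rep _, h⟩,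
        funext fun s => by cases s <;> rfl⟩

end Projections

section Incidence

variable {ι : Type}

lemma setOf_onLine_eq_iInter_ZL2 :
    {w : Pj k ι × Pj k (ι × ι) | onLine w.1 w.2} =
      ⋂ (i : ι) (j : ι) (m : ι), ZL2
        (X (Sum.inr (i, j)) * X (Sum.inl m) + X (Sum.inr (j, m)) * X (Sum.inl i)
          + X (Sum.inr (m, i)) * X (Sum.inl j)) := by
  ext w
  simp only [mem_ofPred_eq, mem_iInter, ZL2, map_add, map_mul, eval_X]
  constructor
  · exact fun h i j m u hu => h _ _ hu.1 hu.2 i j m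
  · exact fun h a b ha hb i j m => h i j m (Sum.elim a b) ⟨ha, hb⟩

lemma isClosed_setOf_onLine :
    IsClosed[PT2 k ι (ι × ι)] {w : Pj k ι × Pj k (ι × ι) | onLine w.1 w.2} := by
  let _ := PT2 k ι (ι × ι)
  rw [setOf_onLine_eq_iInter_ZL2]
  exact isClosed_iInter fun i => isClosed_iInter fun j => isClosed_iInter fun m =>
    isClosed_zeroLocus_zariskiTop PRep2 _

variable [Nonempty ι]

lemma isClosed_joinIncidence (X Y Z : Set (Pj k ι)) (hZ : IsClosed[PT k ι] Z) :
    IsClosed[PT2 k ι (ι × ι)]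
      {w : Pj k ι × Pj k (ι × ι) | w.2 ∈ JL X Y ∧ w.1 ∈ Z ∧ onLine w.1 w.2} := by
  let _ := PT2 k ι (ι × ι)
  have hJL : IsClosed[PT k (ι × ι)] (JL X Y) := @isClosed_closure _ (PT k _) _
  exact (@IsClosed.preimage _ _ _ (PT k _) _ continuous_snd_PT2 _ hJL).inter
    ((@IsClosed.preimage _ _ _ (PT k ι) _ continuous_fst_PT2 _ hZ).inter isClosed_setOf_onLine)

end Incidence

section Closedness

variable {ι : Type} [Nonempty ι] (X Y : Set (Pj k ι))

lemma Nx_eq_setOf (hX : IsClosed[PT k ι] X) :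
    Nx X Y = {q | q.2.2 ∈ JL X Y ∧ q.1 ∈ X ∧ onLine q.1 q.2.2 ∧ onLine q.2.1 q.2.2} := by
  let _ := PT3 k ι ι (ι × ι)
  refine IsClosed.closure_eq ?_
  have hcl := (@IsClosed.preimage _ _ _ (PT2 k ι (ι × ι)) _ continuous_proj13_PT3 _
    (isClosed_joinIncidence X Y X hX)).inter
      (@IsClosed.preimage _ _ _ (PT2 k ι (ι × ι)) _ continuous_proj23_PT3 _ isClosed_setOf_onLine)
  convert hcl using 1
  ext q
  simp only [mem_inter_iff, mem_preimage, mem_ofPred_eq, and_assoc]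

lemma Ny_eq_setOf (hY : IsClosed[PT k ι] Y) :
    Ny X Y = {q | q.2.2 ∈ JL X Y ∧ q.2.1 ∈ Y ∧ onLine q.2.1 q.2.2 ∧ onLine q.1 q.2.2} := by
  let _ := PT3 k ι ι (ι × ι)
  refine IsClosed.closure_eq ?_
  have hcl := (@IsClosed.preimage _ _ _ (PT2 k ι (ι × ι)) _ continuous_proj23_PT3 _
    (isClosed_joinIncidence X Y Y hY)).inter
      (@IsClosed.preimage _ _ _ (PT2 k ι (ι × ι)) _ continuous_proj13_PT3 _ isClosed_setOf_onLine)
  convert hcl using 1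
  ext q
  simp only [mem_inter_iff, mem_preimage, mem_ofPred_eq, and_assoc]

lemma Mj_eq_setOf (hX : IsClosed[PT k ι] X) (hY : IsClosed[PT k ι] Y) :
    Mj X Y = {q | q.2.2.2 ∈ JL X Y ∧ q.1 ∈ X ∧ q.2.2.1 ∈ Y ∧
      onLine q.1 q.2.2.2 ∧ onLine q.2.1 q.2.2.2 ∧ onLine q.2.2.1 q.2.2.2} := by
  let _ := PT4 k ι ι ι (ι × ι)
  refine IsClosed.closure_eq ?_
  have hcl := ((@IsClosed.preimage _ _ _ (PT2 k ι (ι × ι)) _ continuous_proj14_PT4 _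
    (isClosed_joinIncidence X Y X hX)).inter
      (@IsClosed.preimage _ _ _ (PT2 k ι (ι × ι)) _ continuous_proj34_PT4 _
        (isClosed_joinIncidence X Y Y hY))).inter
      (@IsClosed.preimage _ _ _ (PT2 k ι (ι × ι)) _ continuous_proj24_PT4 _ isClosed_setOf_onLine)
  convert hcl using 1
  ext q
  simp only [mem_inter_iff, mem_preimage, mem_ofPred_eq]
  tauto

end Closedness

theorem statement15_general {k : Type} [Field k] {n : ℕ}
    (X Y : Set (Pj k (Fin (n + 1))))
    (hXcl : @IsClosed _ (PT k (Fin (n + 1))) X)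
    (hYcl : @IsClosed _ (PT k (Fin (n + 1))) Y) :
    Mj X Y = {q | (q.1, q.2.1, q.2.2.2) ∈ Nx X Y ∧ (q.2.1, q.2.2.1, q.2.2.2) ∈ Ny X Y} := by
  rw [Mj_eq_setOf X Y hXcl hYcl, Nx_eq_setOf X Y hXcl, Ny_eq_setOf X Y hYcl]
  ext q
  simp only [mem_ofPred_eq]
  tauto

/-- **Proposition.** The square with vertex `M(X,Y)`, sides the projections to
`N(X)` and `N(Y)`, and base `JB(X,Y)` is a fibre square:
`M(X,Y) ≅ N(X) ×_{JB(X,Y)} N(Y)` (as subsets, `M(X,Y)` is exactly the set of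
quadruples `(x,z,y,l)` with `(x,z,l) ∈ N(X)` and `(z,y,l) ∈ N(Y)`). -/
theorem statement15 {k : Type} [Field k] [IsAlgClosed k] {n : ℕ}
    (X Y : Set (Pj k (Fin (n + 1))))
    (hXcl : @IsClosed _ (PT k (Fin (n + 1))) X)
    (hXirr : @IsIrreducible _ (PT k (Fin (n + 1))) X)
    (hYcl : @IsClosed _ (PT k (Fin (n + 1))) Y)
    (hYirr : @IsIrreducible _ (PT k (Fin (n + 1))) Y)
    (hnotlin : ¬(X = Y ∧ IsLinearSub X)) :
    Mj X Y = {q | (q.1, q.2.1, q.2.2.2) ∈ Nx X Y ∧ (q.2.1, q.2.2.1, q.2.2.2) ∈ Ny X Y} :=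
  statement15_general X Y hXcl hYcl
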